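/- For a triangular system of coupled cut Laguerre recursions (each i-th recursion containing mixing terms only involving variables of recursions with index j > i, with j-independent mixing coefficients), the set of values x admitting a nontrivial solution is exactly the union of the root sets {x : L^{α_p}_{κ_p+1}(x) = 0} over p = 0, …, m; equivalently, nontrivial solutions exist precisely for x satisfying ∏_{p=0}^m L^{α_p}_{κ_p+1}(x) = 0, independently of the values of the mixing coefficients. -/

import Mathlib

/-!
Each cut recursion is a square linear system for `a^p_0, …, a^p_{κ_p}`. Since the Sonine
Laguerre polynomials satisfy the same three-term recursion, any solution of the homogeneous
recursion with `a_{-1} = 0` is `a_j = C L_j^α(x)`, so the boundary condition `a_{κ+1} = 0`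
admits `C ≠ 0` exactly when `L_{κ+1}^α(x) = 0`; otherwise the square system is invertible and
solvable for every right-hand side. For the triangular system, the last nonzero component of a
solution solves an unmixed recursion, which forces a zero of the product. Conversely, at the
smallest `p` with `L_{κ_p+1}^{α_p}(x) = 0` start from the nontrivial homogeneous solution (all
higher components zero) and solve the recursions `p - 1, …, 0` one by one, each of them being
invertible.
-/

open Real Finset

/-- Generalized Laguerre polynomial `𝓛_n^α(x)`. -/
noncomputable def glag (α : ℝ) (n : ℕ) (x : ℝ) : ℝ :=
  ∑ k ∈ Finset.range (n + 1),
    (-1 : ℝ) ^ k * Real.Gamma ((n : ℝ) + α + 1) /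
      (Real.Gamma ((k : ℝ) + α + 1) * (Nat.factorial (n - k) : ℝ) * (Nat.factorial k : ℝ)) * x ^ k

/-- Rescaled (Sonine) Laguerre polynomial `L_n^α(x) = 𝓛_n^α(x)/Γ(n+α+1)`. -/
noncomputable def slag (α : ℝ) (n : ℕ) (x : ℝ) : ℝ :=
  glag α n x / Real.Gamma ((n : ℝ) + α + 1)

/-- Rescaled Laguerre polynomial with integer index, zero for negative index. -/
noncomputable def slagZ (α : ℝ) (m : ℤ) (x : ℝ) : ℝ :=
  if 0 ≤ m then slag α m.toNat x else 0

/-- A triangular system of coupled cut Laguerre recursions: recursion p (of order κ_p,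
parameter α_p) contains mixing terms only in the amplitudes of recursions p' > p, with
j-independent mixing coefficients χ p p' and index shifts q p p'; boundary conditions
a^p_j = 0 for j < 0 and j > κ_p. The top recursion p = m has no mixing. -/
def TriangularCutLaguerreSys (m : ℕ) (α : ℕ → ℝ) (κ : ℕ → ℕ)
    (χ : ℕ → ℕ → ℝ) (q : ℕ → ℕ → ℤ) (x : ℝ) (a : ℕ → ℤ → ℝ) : Prop :=
  (∀ p ≤ m, ∀ j : ℤ, j < 0 → a p j = 0) ∧
  (∀ p ≤ m, ∀ j : ℤ, (κ p : ℤ) < j → a p j = 0) ∧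
  (∀ p ≤ m, ∀ j : ℤ, 0 ≤ j → j ≤ (κ p : ℤ) →
    a p (j - 1) - (2 * (j : ℝ) + α p + 1 - x) * a p j
      + ((j : ℝ) + 1) * ((j : ℝ) + α p + 1) * a p (j + 1)
      + ∑ p' ∈ Finset.Ioc p m, χ p p' * a p' (j + q p p') = 0)

open scoped Nat

lemma Gamma_natCast_add_pos {α : ℝ} (hα : -1 < α) (k : ℕ) : 0 < Gamma (k + α + 1) :=
  Gamma_pos_of_pos (by linarith [k.cast_nonneg (α := ℝ)])

noncomputable def lagTerm (α x : ℝ) (k : ℕ) : ℝ :=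
  (-1) ^ k * x ^ k / Gamma (k + α + 1)

lemma x_mul_lagTerm {α : ℝ} (hα : -1 < α) (x : ℝ) (k : ℕ) :
    x * lagTerm α x k = -((k + α + 1) * lagTerm α x (k + 1)) := by
  have hk : (k : ℝ) + α + 1 ≠ 0 := by linarith [k.cast_nonneg (α := ℝ)]
  have hΓ := (Gamma_natCast_add_pos hα k).ne'
  rw [lagTerm, lagTerm, Nat.cast_succ, show (k + 1 : ℝ) + α + 1 = k + α + 1 + 1 by ring,
    Gamma_add_one hk]
  field_simp
  ring

noncomputable def lagSum (α x : ℝ) (n : ℕ) : ℝ :=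
  ∑ k ∈ range (n + 1), (n.choose k : ℝ) * lagTerm α x k

lemma slag_eq_lagSum_div {α : ℝ} (hα : -1 < α) (n : ℕ) (x : ℝ) :
    slag α n x = lagSum α x n / n ! := by
  rw [slag, glag, lagSum, sum_div, sum_div]
  refine sum_congr rfl fun k hk => ?_
  have hkn : k ≤ n := Nat.lt_succ_iff.1 (mem_range.1 hk)
  have hfac : (n.choose k : ℝ) * k ! * (n - k)! = n ! := by
    exact_mod_cast Nat.choose_mul_factorial_mul_factorial hkn
  have := (Gamma_natCast_add_pos hα n).ne'
  have := (Gamma_natCast_add_pos hα k).ne'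
  have : (n.choose k : ℝ) ≠ 0 := by exact_mod_cast (Nat.choose_pos hkn).ne'
  rw [lagTerm, ← hfac]
  field_simp

lemma sum_range_choose_mul_eq {n N : ℕ} (h : n < N) (f : ℕ → ℝ) :
    ∑ k ∈ range (n + 1), (n.choose k : ℝ) * f k = ∑ k ∈ range N, (n.choose k : ℝ) * f k :=
  sum_subset (range_subset_range.2 h) fun k _ hk => by
    rw [Nat.choose_eq_zero_of_lt (by simpa using hk), Nat.cast_zero, zero_mul]

lemma cast_succ_sub_mul_choose (n k : ℕ) :
    ((n : ℝ) + 1 - k) * (n + 1).choose k = (n + 1) * n.choose k := by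
  rcases le_or_gt k (n + 1) with hk | hk
  · have h : ((n.choose k * (n + 1) : ℕ) : ℝ) = ((n + 1).choose k * (n + 1 - k) : ℕ) :=
      congrArg _ (Nat.choose_mul_succ_eq n k)
    push_cast [hk] at h
    linarith
  · rw [Nat.choose_eq_zero_of_lt hk, Nat.choose_eq_zero_of_lt (by omega)]
    simp

lemma lagSum_rec {α : ℝ} (hα : -1 < α) (x : ℝ) (n : ℕ) :
    (n + 1) * lagSum α x n - (2 * n + α + 3 - x) * lagSum α x (n + 1)
      + (n + α + 2) * lagSum α x (n + 2) = 0 := by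
  set A : ℕ → ℝ := fun k =>
    (n + 1) * n.choose k - (2 * n + α + 3) * (n + 1).choose k + (n + α + 2) * (n + 2).choose k
  have hA0 : A 0 = 0 := by simp only [A, Nat.choose_zero_right]; push_cast; ring
  have hA : ∀ k, A (k + 1) = (n + 1).choose k * (k + α + 1) := by
    intro k
    have h₁ := cast_succ_sub_mul_choose n k
    simp only [A, Nat.choose_succ_succ' (n + 1), Nat.choose_succ_succ' n]
    push_cast
    linear_combination h₁
  have hx : x * lagSum α x (n + 1)
      = -∑ k ∈ range (n + 2), ((n + 1).choose k : ℝ) * (k + α + 1) * lagTerm α x (k + 1) := by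
    rw [lagSum, mul_sum, ← sum_neg_distrib]
    refine sum_congr rfl fun k _ => ?_
    rw [mul_left_comm, x_mul_lagTerm hα]
    ring
  have hsplit : (n + 1) * lagSum α x n - (2 * n + α + 3) * lagSum α x (n + 1)
      + (n + α + 2) * lagSum α x (n + 2) = ∑ k ∈ range (n + 3), A k * lagTerm α x k := by
    rw [lagSum, lagSum, lagSum, sum_range_choose_mul_eq (by omega : n < n + 3),
      sum_range_choose_mul_eq (by omega : n + 1 < n + 3), mul_sum, mul_sum, mul_sum,
      ← sum_sub_distrib, ← sum_add_distrib]
    exact sum_congr rfl fun k _ => by ring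
  calc _ = ∑ k ∈ range (n + 3), A k * lagTerm α x k + x * lagSum α x (n + 1) := by
        rw [← hsplit]; ring
    _ = 0 := by
        rw [sum_range_succ', hx, hA0]
        simp only [hA, zero_mul, add_zero, add_neg_cancel]

noncomputable def laguerreOp (α x : ℝ) : (ℤ → ℝ) →ₗ[ℝ] (ℤ → ℝ) where
  toFun b j := b (j - 1) - (2 * (j : ℝ) + α + 1 - x) * b j
    + ((j : ℝ) + 1) * ((j : ℝ) + α + 1) * b (j + 1)
  map_add' b c := by ext j; simp only [Pi.add_apply]; ring
  map_smul' C b := by ext j; simp only [Pi.smul_apply, smul_eq_mul, RingHom.id_apply]; ring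

lemma laguerreOp_apply (α x : ℝ) (b : ℤ → ℝ) (j : ℤ) :
    laguerreOp α x b j = b (j - 1) - (2 * (j : ℝ) + α + 1 - x) * b j
      + ((j : ℝ) + 1) * ((j : ℝ) + α + 1) * b (j + 1) := rfl

lemma slagZ_natCast (α : ℝ) (n : ℕ) (x : ℝ) : slagZ α n x = slag α n x := by
  simp [slagZ]

lemma slagZ_of_neg (α : ℝ) {j : ℤ} (hj : j < 0) (x : ℝ) : slagZ α j x = 0 :=
  if_neg hj.not_ge

lemma laguerreOp_slagZ {α : ℝ} (hα : -1 < α) (x : ℝ) (n : ℕ) :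
    laguerreOp α x (fun j => slagZ α j x) n = 0 := by
  rw [laguerreOp_apply]
  rcases n with _ | n
  · have h := x_mul_lagTerm hα x 0
    have h₀ : slagZ α 0 x = lagTerm α x 0 := by
      simpa [lagSum, ← slagZ_natCast] using slag_eq_lagSum_div hα 0 x
    have h₁ : slagZ α 1 x = lagTerm α x 0 + lagTerm α x 1 := by
      simpa [lagSum, sum_range_succ, ← slagZ_natCast] using slag_eq_lagSum_div hα 1 x
    norm_num [slagZ_of_neg, h₀, h₁] at h ⊢
    linear_combination h
  · have h := lagSum_rec hα x n
    have hn : ((n + 1 : ℕ) : ℤ) - 1 = n := by push_cast; ring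
    have hn' : ((n + 1 : ℕ) : ℤ) + 1 = (n + 2 : ℕ) := by push_cast; ring
    rw [hn, hn', slagZ_natCast, slagZ_natCast, slagZ_natCast, slag_eq_lagSum_div hα,
      slag_eq_lagSum_div hα, slag_eq_lagSum_div hα]
    simp only [Nat.factorial_succ]
    have := n.factorial_pos.ne'
    field_simp
    push_cast
    linear_combination ((n ! : ℝ) ^ 2 * (n + 1) * (n + 2)) * h

def IsCutLaguerreSolution (α x : ℝ) (κ : ℕ) (r b : ℤ → ℝ) : Prop :=
  (∀ j : ℤ, j < 0 → b j = 0) ∧ (∀ j : ℤ, (κ : ℤ) < j → b j = 0) ∧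
    ∀ j : ℤ, 0 ≤ j → j ≤ (κ : ℤ) → laguerreOp α x b j + r j = 0

lemma isCutLaguerreSolution_zero (α x : ℝ) (κ : ℕ) : IsCutLaguerreSolution α x κ 0 0 :=
  ⟨fun _ _ => rfl, fun _ _ => rfl, fun _ _ _ => by simp⟩

lemma eq_zero_of_laguerreOp_eq_zero {α x : ℝ} (hα : -1 < α) {d : ℤ → ℝ} {N : ℕ}
    (hm : d (-1) = 0) (h₀ : d 0 = 0) (hd : ∀ j : ℕ, j < N → laguerreOp α x d j = 0) :
    ∀ n : ℕ, n ≤ N → d n = 0 := by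
  suffices ∀ n : ℕ, n ≤ N → d (n - 1) = 0 ∧ d n = 0 from fun n hn => (this n hn).2
  intro n
  induction n with
  | zero => simpa using ⟨hm, h₀⟩
  | succ n ih =>
    intro hn
    obtain ⟨hprev, hcur⟩ := ih (by omega)
    have hrec := hd n (by omega)
    have hc : ((n : ℝ) + 1) * (n + α + 1) ≠ 0 := by
      have : (0 : ℝ) ≤ n := n.cast_nonneg
      exact mul_ne_zero (by positivity) (by linarith)
    rw [laguerreOp_apply, hprev, hcur] at hrec
    push_cast
    refine ⟨by simpa using hcur, ?_⟩
    simpa [hc] using hrec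

lemma slag_zero_ne_zero {α : ℝ} (hα : -1 < α) (x : ℝ) : slag α 0 x ≠ 0 := by
  simpa [slag_eq_lagSum_div hα, lagSum, lagTerm] using (Gamma_natCast_add_pos hα 0).ne'

lemma IsCutLaguerreSolution.eq_zero {α x : ℝ} (hα : -1 < α) {κ : ℕ} {b : ℤ → ℝ}
    (hb : IsCutLaguerreSolution α x κ 0 b) (hL : slag α (κ + 1) x ≠ 0) : b = 0 := by
  obtain ⟨hneg, htop, hrec⟩ := hb
  set C := b 0 / slag α 0 x
  have hprop : ∀ n : ℕ, n ≤ κ + 1 → b n - C * slag α n x = 0 := by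
    have h₀ : slagZ α 0 x = slag α 0 x := slagZ_natCast α 0 x
    have := eq_zero_of_laguerreOp_eq_zero (x := x) hα (d := b - C • fun j => slagZ α j x)
      (N := κ + 1) (by simp [hneg, slagZ_of_neg])
      (by simp [C, h₀, slag_zero_ne_zero hα])
      (fun j hj => by
        simpa [laguerreOp_slagZ hα] using hrec j (by positivity) (by omega))
    simpa [slagZ_natCast] using this
  have hC : C = 0 := by
    have := hprop (κ + 1) le_rfl
    rw [htop _ (by omega), zero_sub, neg_eq_zero] at this
    exact (mul_eq_zero.1 this).resolve_right hL
  ext j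
  rcases lt_or_ge j 0 with hj | hj
  · exact hneg j hj
  rcases lt_or_ge (κ : ℤ) j with hj' | hj'
  · exact htop j hj'
  lift j to ℕ using hj
  simpa [hC] using hprop j (by omega)

lemma exists_isCutLaguerreSolution_zero {α x : ℝ} (hα : -1 < α) {κ : ℕ}
    (hL : slag α (κ + 1) x = 0) : ∃ b ≠ 0, IsCutLaguerreSolution α x κ 0 b := by
  set b : ℤ → ℝ := fun j => if j ≤ κ then slagZ α j x else 0
  have hagree : ∀ i : ℤ, i ≤ κ + 1 → b i = slagZ α i x := by
    intro i hi
    rcases hi.lt_or_eq with hi | rfl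
    · exact if_pos (by omega)
    · rw [show b (κ + 1) = 0 from if_neg (by omega), ← Nat.cast_succ, slagZ_natCast, hL]
  refine ⟨b, fun h => slag_zero_ne_zero hα x ?_, fun j hj => ?_, fun j hj => if_neg (by omega),
    fun j hj hj' => ?_⟩
  · rw [← slagZ_natCast, Nat.cast_zero, ← hagree 0 (by omega), h, Pi.zero_apply]
  · rw [hagree j (by omega), slagZ_of_neg α hj]
  · lift j to ℕ using hj
    rw [Pi.zero_apply, add_zero, laguerreOp_apply, hagree _ (by omega), hagree _ (by omega),
      hagree _ (by omega)]
    exact laguerreOp_slagZ hα x j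

lemma exists_isCutLaguerreSolution {α x : ℝ} (hα : -1 < α) {κ : ℕ}
    (hL : slag α (κ + 1) x ≠ 0) (r : ℤ → ℝ) : ∃ b, IsCutLaguerreSolution α x κ r b := by
  let ι : Set.Icc (0 : ℤ) κ → ℤ := Subtype.val
  let E := Function.ExtendByZero.linearMap ℝ ι
  -- the cut recursion as an endomorphism of `ℝ^[0, κ]`: injective by `eq_zero`, hence surjective
  let T := LinearMap.funLeft ℝ ℝ ι ∘ₗ laguerreOp α x ∘ₗ E
  have hE_out : ∀ v j, ¬ (0 ≤ j ∧ j ≤ (κ : ℤ)) → E v j = 0 := fun v j hj =>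
    Function.extend_apply' _ _ _ fun ⟨i, hi⟩ => hj (hi ▸ i.2)
  have hE_sol : ∀ v s, (∀ j (hj : 0 ≤ j ∧ j ≤ (κ : ℤ)), T v ⟨j, hj⟩ + s j = 0) →
      IsCutLaguerreSolution α x κ s (E v) := fun v s hs =>
    ⟨fun j hj => hE_out v j (by omega), fun j hj => hE_out v j (by omega),
      fun j hj hj' => hs j ⟨hj, hj'⟩⟩
  have hT_inj : Function.Injective T := by
    rw [← LinearMap.ker_eq_bot, LinearMap.ker_eq_bot']
    intro v hv
    have hEv := (hE_sol v 0 fun j hj => by simp [hv]).eq_zero hα hL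
    ext i
    rw [← Subtype.val_injective.extend_apply v 0 i]
    exact congrFun hEv i
  obtain ⟨v, hv⟩ := LinearMap.injective_iff_surjective.1 hT_inj fun i => -r i
  exact ⟨E v, hE_sol v r fun j hj => by simp [hv]⟩

def triangularMixing (m : ℕ) (χ : ℕ → ℕ → ℝ) (q : ℕ → ℕ → ℤ) (a : ℕ → ℤ → ℝ) (p : ℕ)
    (j : ℤ) : ℝ :=
  ∑ p' ∈ Ioc p m, χ p p' * a p' (j + q p p')

def SolvesRowsFrom (m : ℕ) (α : ℕ → ℝ) (κ : ℕ → ℕ) (χ : ℕ → ℕ → ℝ) (q : ℕ → ℕ → ℤ) (x : ℝ)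
    (t : ℕ) (a : ℕ → ℤ → ℝ) : Prop :=
  ∀ p, t ≤ p → p ≤ m → IsCutLaguerreSolution (α p) x (κ p) (triangularMixing m χ q a p) (a p)

section Triangular

variable {m : ℕ} {α : ℕ → ℝ} {κ : ℕ → ℕ} {χ : ℕ → ℕ → ℝ} {q : ℕ → ℕ → ℤ} {x : ℝ}

lemma triangularMixing_eq_zero {a : ℕ → ℤ → ℝ} {p : ℕ} (ha : ∀ p' ∈ Ioc p m, a p' = 0) :
    triangularMixing m χ q a p = 0 := by
  ext j
  exact sum_eq_zero fun p' hp' => by simp [ha p' hp']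

lemma triangularMixing_update_of_le {a : ℕ → ℤ → ℝ} {t p : ℕ} (b : ℤ → ℝ) (htp : t ≤ p) :
    triangularMixing m χ q (Function.update a t b) p = triangularMixing m χ q a p := by
  ext j
  refine sum_congr rfl fun p' hp' => ?_
  rw [Function.update_of_ne (by have := (mem_Ioc.1 hp').1; omega)]

lemma solvesRowsFrom_zero_iff {a : ℕ → ℤ → ℝ} :
    SolvesRowsFrom m α κ χ q x 0 a ↔ TriangularCutLaguerreSys m α κ χ q x a :=
  ⟨fun h => ⟨fun p hp => (h p p.zero_le hp).1, fun p hp => (h p p.zero_le hp).2.1,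
    fun p hp => (h p p.zero_le hp).2.2⟩,
   fun ⟨h₀, h₁, h₂⟩ p _ hp => ⟨h₀ p hp, h₁ p hp, h₂ p hp⟩⟩

lemma SolvesRowsFrom.update {a : ℕ → ℤ → ℝ} {t : ℕ} (hα : -1 < α t)
    (hL : slag (α t) (κ t + 1) x ≠ 0) (ha : SolvesRowsFrom m α κ χ q x (t + 1) a) :
    ∃ b, SolvesRowsFrom m α κ χ q x t (Function.update a t b) := by
  obtain ⟨b, hb⟩ := exists_isCutLaguerreSolution hα hL (triangularMixing m χ q a t)
  refine ⟨b, fun p htp hpm => ?_⟩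
  rw [triangularMixing_update_of_le b htp]
  rcases htp.eq_or_lt with rfl | htp
  · rwa [Function.update_self]
  · rw [Function.update_of_ne htp.ne']
    exact ha p htp hpm

lemma exists_slag_eq_zero_of_solution (hα : ∀ p ≤ m, -1 < α p) {a : ℕ → ℤ → ℝ}
    (ha : TriangularCutLaguerreSys m α κ χ q x a) (hne : ∃ p ≤ m, a p ≠ 0) :
    ∃ p ≤ m, slag (α p) (κ p + 1) x = 0 := by
  classical
  obtain ⟨p, hp, hap⟩ := hne
  set p₁ := Nat.findGreatest (fun p => a p ≠ 0) m
  have hp₁ : a p₁ ≠ 0 := Nat.findGreatest_spec (P := fun p => a p ≠ 0) hp hap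
  have hp₁m : p₁ ≤ m := Nat.findGreatest_le m
  have hmix : triangularMixing m χ q a p₁ = 0 := triangularMixing_eq_zero fun p' hp' =>
    not_not.1 (Nat.findGreatest_is_greatest (mem_Ioc.1 hp').1 (mem_Ioc.1 hp').2)
  refine ⟨p₁, hp₁m, by_contra fun hL => hp₁ ?_⟩
  have hsol := solvesRowsFrom_zero_iff.2 ha p₁ p₁.zero_le hp₁m
  rw [hmix] at hsol
  exact hsol.eq_zero (hα p₁ hp₁m) hL

lemma exists_solution_of_slag_eq_zero (hα : ∀ p ≤ m, -1 < α p) {p₀ : ℕ} (hp₀ : p₀ ≤ m)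
    (h₀ : slag (α p₀) (κ p₀ + 1) x = 0) (hlt : ∀ t < p₀, slag (α t) (κ t + 1) x ≠ 0) :
    ∃ a, TriangularCutLaguerreSys m α κ χ q x a ∧ a p₀ ≠ 0 := by
  obtain ⟨b₀, hb₀, hb₀sol⟩ := exists_isCutLaguerreSolution_zero (hα p₀ hp₀) h₀
  have hbase : SolvesRowsFrom m α κ χ q x p₀ (Function.update 0 p₀ b₀) := by
    intro p hp hpm
    rw [triangularMixing_eq_zero fun p' hp' =>
      Function.update_of_ne (by have := (mem_Ioc.1 hp').1; omega) _ _]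
    rcases hp.eq_or_lt with rfl | hp
    · rwa [Function.update_self]
    · rw [Function.update_of_ne hp.ne']
      exact isCutLaguerreSolution_zero _ _ _
  have hdown : ∀ t ≤ p₀, ∃ a, SolvesRowsFrom m α κ χ q x t a ∧ a p₀ ≠ 0 := by
    intro t ht
    induction ht using Nat.decreasingInduction with
    | self => exact ⟨_, hbase, by rwa [Function.update_self]⟩
    | of_succ t ht ih =>
      obtain ⟨a, ha, ha₀⟩ := ih
      obtain ⟨b, hb⟩ := ha.update (hα t (by omega)) (hlt t ht)
      exact ⟨_, hb, by rwa [Function.update_of_ne ht.ne']⟩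
  obtain ⟨a, ha, ha₀⟩ := hdown 0 p₀.zero_le
  exact ⟨a, solvesRowsFrom_zero_iff.1 ha, ha₀⟩

end Triangular

/-- Corollary 5 (th.piate): for any triangular system of coupled cut Laguerre recursions,
a nontrivial solution exists precisely when ∏_{p=0}^m L^{α_p}_{κ_p+1}(x) = 0, independently
of the values of the mixing coefficients. -/
theorem triangular_system_spectrum (m : ℕ) (α : ℕ → ℝ) (κ : ℕ → ℕ)
    (hα : ∀ p ≤ m, α p > -1) (χ : ℕ → ℕ → ℝ) (q : ℕ → ℕ → ℤ) (x : ℝ) :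
    (∃ a : ℕ → ℤ → ℝ, TriangularCutLaguerreSys m α κ χ q x a ∧
        ∃ p ≤ m, ∃ j : ℤ, a p j ≠ 0) ↔
      ∏ p ∈ Finset.range (m + 1), slag (α p) (κ p + 1) x = 0 := by
  classical
  rw [prod_eq_zero_iff]
  constructor
  · rintro ⟨a, ha, p, hp, j, hj⟩
    obtain ⟨p, hp, hL⟩ := exists_slag_eq_zero_of_solution hα ha ⟨p, hp, fun h => hj (by simp [h])⟩
    exact ⟨p, mem_range.2 (by omega), hL⟩
  · rintro ⟨p, hp, hL⟩
    have hex : ∃ p ≤ m, slag (α p) (κ p + 1) x = 0 := ⟨p, by simpa [Nat.lt_succ_iff] using hp, hL⟩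
    obtain ⟨hp₀, h₀⟩ := Nat.find_spec hex
    obtain ⟨a, ha, ha₀⟩ := exists_solution_of_slag_eq_zero (χ := χ) (q := q) hα hp₀ h₀
      fun t ht hL => Nat.find_min hex ht ⟨by omega, hL⟩
    exact ⟨a, ha, _, hp₀, Function.ne_iff.1 ha₀⟩
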